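/- arXiv:2505.06043 — 6 statements merged into one kernel-verified Lean document; each statement's English description precedes it below -/
import Mathlib

section
/- Let p(x) = x^3 - a2*x^2 + a1*x - a0 with a0, a1, a2 > 0. Set α = min{a2, a0/a1} and β = max{a2, a0/a1}. Then p(x) < 0 for all x in (0, α) and p(x) > 0 for all x > β. -/
/-! Write `p x = x ^ 2 * (x - a2) + a1 * (x - a0 / a1)`. Below `min a2 (a0 / a1)` both summands are
negative, above `max a2 (a0 / a1)` the first is nonnegative and the second positive. -/

theorem cubic_eq_sq_mul_sub_add_mul_sub {K : Type*} [Field K] {a0 a1 : K} (a2 x : K) (h1 : a1 ≠ 0) :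
    x ^ 3 - a2 * x ^ 2 + a1 * x - a0 = x ^ 2 * (x - a2) + a1 * (x - a0 / a1) := by
  field_simp
  ring

section

variable {K : Type*} [Field K] [LinearOrder K] [IsStrictOrderedRing K]

theorem cubic_neg_of_lt_of_lt {a0 a1 a2 x : K} (h1 : 0 < a1) (hx : 0 < x) (hx2 : x < a2)
    (hx0 : x < a0 / a1) : x ^ 3 - a2 * x ^ 2 + a1 * x - a0 < 0 := by
  rw [cubic_eq_sq_mul_sub_add_mul_sub a2 x h1.ne']
  have hsq : x ^ 2 * (x - a2) < 0 := mul_neg_of_pos_of_neg (by positivity) (sub_neg.2 hx2)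
  have hlin : a1 * (x - a0 / a1) < 0 := mul_neg_of_pos_of_neg h1 (sub_neg.2 hx0)
  linarith

theorem cubic_pos_of_lt_of_lt {a0 a1 a2 x : K} (h1 : 0 < a1) (hx2 : a2 < x)
    (hx0 : a0 / a1 < x) : 0 < x ^ 3 - a2 * x ^ 2 + a1 * x - a0 := by
  rw [cubic_eq_sq_mul_sub_add_mul_sub a2 x h1.ne']
  have hsq : 0 ≤ x ^ 2 * (x - a2) := mul_nonneg (sq_nonneg x) (sub_nonneg.2 hx2.le)
  have hlin : 0 < a1 * (x - a0 / a1) := mul_pos h1 (sub_pos.2 hx0)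
  linarith

end

theorem cubic_sign_general (a0 a1 a2 : ℝ) (h1 : 0 < a1) :
    (∀ x : ℝ, 0 < x → x < min a2 (a0 / a1) →
      x ^ 3 - a2 * x ^ 2 + a1 * x - a0 < 0) ∧
    (∀ x : ℝ, max a2 (a0 / a1) < x →
      0 < x ^ 3 - a2 * x ^ 2 + a1 * x - a0) :=
  ⟨fun _ hx hmin => cubic_neg_of_lt_of_lt h1 hx (lt_min_iff.1 hmin).1 (lt_min_iff.1 hmin).2,
    fun _ hmax => cubic_pos_of_lt_of_lt h1 (max_lt_iff.1 hmax).1 (max_lt_iff.1 hmax).2⟩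

theorem cubic_sign (a0 a1 a2 : ℝ) (h0 : 0 < a0) (h1 : 0 < a1) (h2 : 0 < a2) :
    (∀ x : ℝ, 0 < x → x < min a2 (a0 / a1) →
      x ^ 3 - a2 * x ^ 2 + a1 * x - a0 < 0) ∧
    (∀ x : ℝ, max a2 (a0 / a1) < x →
      0 < x ^ 3 - a2 * x ^ 2 + a1 * x - a0) :=
  cubic_sign_general a0 a1 a2 h1
end

section
/- Let γA, γS, γR, γD be real numbers with γA, γS, γR > 0, γD ≥ 0 and γS = γR + γD. Then the quadratic h(ζ) = ζ^2 - (γA + γS)ζ + γR + γD·γA has two real roots h- ≤ h+ satisfying h- ≥ γR/(γA + γR + γD) and h+ ≤ γA + γS. -/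
/-!
With `b = γA + γS` and `c = γR + γD γA ≥ 0`, the larger root is at most `b` because
`√(b² - 4c) ≤ b`. By Vieta the smaller root is `c / h₊ ≥ c / b ≥ γR / b`, and
`b = γA + γR + γD`.
-/

section MonicQuadratic

variable {b c d : ℝ}

lemma monic_quadratic_eval_half_add_eq_zero (hd : d ^ 2 = b ^ 2 - 4 * c) :
    ((b + d) / 2) ^ 2 - b * ((b + d) / 2) + c = 0 := by
  linear_combination hd / 4

lemma monic_quadratic_eval_half_sub_eq_zero (hd : d ^ 2 = b ^ 2 - 4 * c) :
    ((b - d) / 2) ^ 2 - b * ((b - d) / 2) + c = 0 := by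
  linear_combination hd / 4

lemma half_sub_mul_half_add_eq (hd : d ^ 2 = b ^ 2 - 4 * c) :
    (b - d) / 2 * ((b + d) / 2) = c := by
  linear_combination -hd / 4

lemma add_sqrt_discrim_div_two_le (hb : 0 ≤ b) (hc : 0 ≤ c) :
    (b + √(b ^ 2 - 4 * c)) / 2 ≤ b := by
  have : √(b ^ 2 - 4 * c) ≤ b := Real.sqrt_le_iff.mpr ⟨hb, by linarith⟩
  linarith

lemma div_le_sub_sqrt_discrim_div_two (hb : 0 < b) (hc : 0 ≤ c) (hdisc : 0 ≤ b ^ 2 - 4 * c) :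
    c / b ≤ (b - √(b ^ 2 - 4 * c)) / 2 := by
  have hd := Real.sq_sqrt hdisc
  have hp_pos : 0 < (b + √(b ^ 2 - 4 * c)) / 2 := by positivity
  calc c / b ≤ c / ((b + √(b ^ 2 - 4 * c)) / 2) :=
        div_le_div_of_nonneg_left hc hp_pos (add_sqrt_discrim_div_two_le hb.le hc)
    _ = (b - √(b ^ 2 - 4 * c)) / 2 := by
        rw [div_eq_iff hp_pos.ne', half_sub_mul_half_add_eq hd]

end MonicQuadratic

theorem quadratic_root_bounds (γA γS γR γD : ℝ)
    (hA : 0 < γA) (hS : 0 < γS) (hR : 0 < γR) (hD : 0 ≤ γD)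
    (hsum : γS = γR + γD)
    (hdisc : 0 ≤ (γA + γS) ^ 2 - 4 * (γR + γD * γA)) :
    let hm := ((γA + γS) - Real.sqrt ((γA + γS) ^ 2 - 4 * (γR + γD * γA))) / 2
    let hp := ((γA + γS) + Real.sqrt ((γA + γS) ^ 2 - 4 * (γR + γD * γA))) / 2
    hm ≤ hp ∧
    hm ^ 2 - (γA + γS) * hm + (γR + γD * γA) = 0 ∧
    hp ^ 2 - (γA + γS) * hp + (γR + γD * γA) = 0 ∧
    γR / (γA + γR + γD) ≤ hm ∧
    hp ≤ γA + γS := by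
  intro hm hp
  have hb : 0 < γA + γS := add_pos hA hS
  have hDA : 0 ≤ γD * γA := mul_nonneg hD hA.le
  have hc : 0 ≤ γR + γD * γA := by linarith
  have hd := Real.sq_sqrt hdisc
  have hsum' : γA + γR + γD = γA + γS := by rw [hsum, add_assoc]
  refine ⟨?_, monic_quadratic_eval_half_sub_eq_zero hd, monic_quadratic_eval_half_add_eq_zero hd,
    ?_, add_sqrt_discrim_div_two_le hb.le hc⟩
  · have := Real.sqrt_nonneg ((γA + γS) ^ 2 - 4 * (γR + γD * γA))
    simp only [hm, hp]
    linarith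
  · rw [hsum']
    exact (div_le_div_of_nonneg_right (by linarith) hb.le).trans
      (div_le_sub_sqrt_discrim_div_two hb hc hdisc)
end

section
/- Let γA, γD, γR > 0 with γA > 1 and γD < 1. Set γS = γR + γD. Then the negative root λ- of λ^2 - (γA - γD)λ - (γR + γA·γD) satisfies |λ-| ≥ γS/(γA + γS), i.e., λ- ≤ -γS/(γA + γS). -/
/-!
By Vieta, `λ₋ · λ₊ = -(γR + γA γD)`, so `|λ₋| = (γR + γA γD) / λ₊`. The positive root satisfies
`λ₊ ≤ γA + γR` as soon as `γA + γD + γR ≥ 1`, giving `|λ₋| ≥ (γR + γA γD) / (γA + γR)`, and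
cross-multiplying shows that this dominates `(γR + γD) / (γA + γR + γD)` when `γA ≥ 1`.
-/

lemma quadratic_roots_mul {b D : ℝ} (hD : 0 ≤ D) :
    (b - √D) / 2 * ((b + √D) / 2) = (b ^ 2 - D) / 4 := by
  ring_nf
  rw [Real.sq_sqrt hD]

lemma sqrt_sq_add_four_mul_le {x r : ℝ} (hr : 0 ≤ r) (hxr : 1 ≤ x + r) :
    √(x ^ 2 + 4 * r) ≤ x + 2 * r :=
  Real.sqrt_le_iff.mpr ⟨by linarith, by nlinarith⟩

lemma div_add_le_add_mul_div {a d r : ℝ} (ha : 1 ≤ a) (hd : 0 ≤ d) (hr : 0 ≤ r) :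
    (r + d) / (a + (r + d)) ≤ (r + a * d) / (a + r) := by
  rw [div_le_div_iff₀ (by linarith) (by linarith)]
  -- the difference of the cross products is `a d (a + r + d - 1)`
  nlinarith [mul_nonneg (mul_nonneg (by linarith : (0 : ℝ) ≤ a) hd)
    (by linarith : (0 : ℝ) ≤ a + r + d - 1)]

theorem neg_root_upper_bound_general (γA γD γR : ℝ)
    (hD : 0 < γD) (hR : 0 < γR)
    (hA1 : 1 < γA) (γS : ℝ) (hS : γS = γR + γD) :
    (γA - γD - Real.sqrt ((γA + γD) ^ 2 + 4 * γR)) / 2 ≤ -(γS / (γA + γS)) := by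
  subst hS
  set D := (γA + γD) ^ 2 + 4 * γR
  have hprod : (γA - γD - √D) / 2 * ((γA - γD + √D) / 2) = -(γR + γA * γD) := by
    rw [quadratic_roots_mul (by positivity)]
    ring
  have hpos_lower : γA ≤ (γA - γD + √D) / 2 := by
    have := Real.abs_le_sqrt (x := γA + γD) (y := D) (by linarith)
    linarith [le_abs_self (γA + γD)]
  have hpos_upper : (γA - γD + √D) / 2 ≤ γA + γR := by
    linarith [sqrt_sq_add_four_mul_le (x := γA + γD) hR.le (by linarith)]
  have hneg : (γA - γD - √D) / 2 = -((γR + γA * γD) / ((γA - γD + √D) / 2)) := by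
    rw [← neg_div, eq_div_iff (by linarith)]
    exact hprod
  rw [hneg, neg_le_neg_iff]
  calc (γR + γD) / (γA + (γR + γD)) ≤ (γR + γA * γD) / (γA + γR) :=
        div_add_le_add_mul_div hA1.le hD.le hR.le
    _ ≤ (γR + γA * γD) / ((γA - γD + √D) / 2) :=
        div_le_div_of_nonneg_left (by positivity) (by linarith) hpos_upper

theorem neg_root_upper_bound (γA γD γR : ℝ)
    (hA : 0 < γA) (hD : 0 < γD) (hR : 0 < γR)
    (hA1 : 1 < γA) (hD1 : γD < 1) (γS : ℝ) (hS : γS = γR + γD) :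
    (γA - γD - Real.sqrt ((γA + γD) ^ 2 + 4 * γR)) / 2 ≤ -(γS / (γA + γS)) :=
  neg_root_upper_bound_general γA γD γR hD hR hA1 γS hS
end

section
/- Let A be an n×n symmetric positive definite real matrix and λ a real number not in the interval [λ_min(A), λ_max(A)]. Then for every nonzero vector s ∈ ℝ^n there exists a nonzero vector w ∈ ℝ^n such that s^T (A - λI)^{-1} s / (s^T s) = (w^T A w / (w^T w) - λ)^{-1}. -/
/-!
Diagonalise `A = U diag(μ) Uᵀ` with `U` orthogonal. In the coordinates `c = Uᵀ x` the quotient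
`x ⬝ (U diag(d) Uᵀ) x / (x ⬝ x)` is the centre of mass of the values `d k` with weights
`c k ^ 2`, so it lies in the convex hull of the `d k`; conversely every point `∑ p k • d k` of
that hull is attained, at `c = √p`. The resolvent has `d k = (μ k - λ)⁻¹`; as
`λ ∉ [μ_min, μ_max]`, the map `t ↦ (t - λ)⁻¹` is continuous on this interval, so the image of
the interval is convex and contains every `d k`. Hence the resolvent quotient is `(t - λ)⁻¹` for
some `t ∈ [μ_min, μ_max]`, and such a `t` is a Rayleigh quotient of `A`.
-/

open Matrix Finset Set

theorem exists_mem_stdSimplex_sum_smul_eq_of_mem_convexHull_range {ι R E : Type*} [Fintype ι]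
    [DecidableEq ι] [Field R] [LinearOrder R] [IsStrictOrderedRing R] [AddCommGroup E]
    [Module R E] {v : ι → E} {x : E} (hx : x ∈ convexHull R (range v)) :
    ∃ p ∈ stdSimplex R ι, ∑ i, p i • v i = x := by
  have hv : range v = Fintype.linearCombination R v '' range fun i => Pi.single i 1 := by
    rw [← range_comp]
    congr 1
    funext i
    simp [Fintype.linearCombination_apply_single]
  rw [hv, ← LinearMap.image_convexHull, convexHull_rangle_single_eq_stdSimplex] at hx
  obtain ⟨p, hp, rfl⟩ := hx
  exact ⟨p, hp, (Fintype.linearCombination_apply R v p).symm⟩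

theorem Icc_iInf_iSup_subset_convexHull_range {ι : Type*} [Nonempty ι] [Finite ι]
    (f : ι → ℝ) :
    Icc (⨅ i, f i) (⨆ i, f i) ⊆ convexHull ℝ (range f) := by
  obtain ⟨i, hi⟩ := exists_eq_ciInf_of_finite (f := f)
  obtain ⟨j, hj⟩ := exists_eq_ciSup_of_finite (f := f)
  rw [← hi, ← hj]
  exact Icc_subset_segment.trans <|
    segment_subset_convexHull (mem_range_self i) (mem_range_self j)

namespace Matrix

variable {n : Type*} [Fintype n] [DecidableEq n]

theorem dotProduct_mul_diagonal_mul_transpose_mulVec (U : Matrix n n ℝ) (d x : n → ℝ) :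
    x ⬝ᵥ (U * diagonal d * Uᵀ) *ᵥ x = ∑ k, d k * (Uᵀ *ᵥ x) k ^ 2 := by
  rw [← mulVec_mulVec, ← mulVec_mulVec, dotProduct_mulVec, ← mulVec_transpose, dotProduct]
  exact Finset.sum_congr rfl fun k _ => by rw [mulVec_diagonal]; ring

section Orthogonal

variable {U : Matrix n n ℝ} (hU : U * Uᵀ = 1)
include hU

theorem dotProduct_self_eq_sum_transpose_mulVec_sq (x : n → ℝ) :
    x ⬝ᵥ x = ∑ k, (Uᵀ *ᵥ x) k ^ 2 := by
  simpa [hU] using dotProduct_mul_diagonal_mul_transpose_mulVec U 1 x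

theorem dotProduct_mul_diagonal_mul_transpose_mulVec_div_eq_centerMass (d x : n → ℝ) :
    x ⬝ᵥ (U * diagonal d * Uᵀ) *ᵥ x / (x ⬝ᵥ x) =
      univ.centerMass (fun k => (Uᵀ *ᵥ x) k ^ 2) d := by
  rw [dotProduct_mul_diagonal_mul_transpose_mulVec,
    dotProduct_self_eq_sum_transpose_mulVec_sq hU, Finset.centerMass, smul_eq_mul, div_eq_inv_mul]
  simp only [smul_eq_mul, mul_comm]

theorem dotProduct_mul_diagonal_mul_transpose_mulVec_div_mem_convexHull (d : n → ℝ)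
    {x : n → ℝ} (hx : x ≠ 0) :
    x ⬝ᵥ (U * diagonal d * Uᵀ) *ᵥ x / (x ⬝ᵥ x) ∈ convexHull ℝ (range d) := by
  rw [dotProduct_mul_diagonal_mul_transpose_mulVec_div_eq_centerMass hU]
  refine univ.centerMass_mem_convexHull (fun k _ => sq_nonneg _) ?_ fun k _ => mem_range_self k
  rw [← dotProduct_self_eq_sum_transpose_mulVec_sq hU]
  simpa using dotProduct_self_star_pos_iff.mpr hx

theorem exists_dotProduct_mul_diagonal_mul_transpose_mulVec_div_eq {d : n → ℝ} {t : ℝ}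
    (ht : t ∈ convexHull ℝ (range d)) :
    ∃ w ≠ 0, w ⬝ᵥ (U * diagonal d * Uᵀ) *ᵥ w / (w ⬝ᵥ w) = t := by
  obtain ⟨p, ⟨hp0, hp1⟩, rfl⟩ :=
    exists_mem_stdSimplex_sum_smul_eq_of_mem_convexHull_range ht
  set c : n → ℝ := fun k => √(p k)
  have hc : (fun k => (Uᵀ *ᵥ U *ᵥ c) k ^ 2) = p := by
    rw [mulVec_mulVec, mul_eq_one_comm.mp hU, one_mulVec]
    exact funext fun k => Real.sq_sqrt (hp0 k)
  refine ⟨U *ᵥ c, fun h => ?_, ?_⟩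
  · have := dotProduct_self_eq_sum_transpose_mulVec_sq hU (U *ᵥ c)
    rw [hc, hp1, h, dotProduct_zero] at this
    exact zero_ne_one this
  · rw [dotProduct_mul_diagonal_mul_transpose_mulVec_div_eq_centerMass hU, hc,
      centerMass_eq_of_sum_1 _ _ hp1]

theorem inv_mul_diagonal_mul_transpose_sub_smul_one {d : n → ℝ} {lam : ℝ}
    (hd : ∀ k, d k ≠ lam) :
    (U * diagonal d * Uᵀ - lam • 1)⁻¹ = U * diagonal (fun k => (d k - lam)⁻¹) * Uᵀ := by
  have hshift : U * diagonal d * Uᵀ - lam • 1 = U * diagonal (fun k => d k - lam) * Uᵀ := by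
    rw [← diagonal_sub d fun _ => lam, ← smul_one_eq_diagonal, Matrix.mul_sub, Matrix.sub_mul,
      Matrix.mul_smul, Matrix.smul_mul, mul_one, hU]
  apply inv_eq_right_inv
  rw [hshift, Matrix.mul_assoc, ← Matrix.mul_assoc Uᵀ, ← Matrix.mul_assoc Uᵀ,
    mul_eq_one_comm.mp hU, Matrix.one_mul, ← Matrix.mul_assoc, Matrix.mul_assoc U,
    diagonal_mul_diagonal]
  simp [fun k => sub_ne_zero.mpr (hd k), hU]

end Orthogonal

namespace IsHermitian

variable {A : Matrix n n ℝ} (hA : A.IsHermitian)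
include hA

theorem mul_transpose_eigenvectorUnitary :
    (hA.eigenvectorUnitary : Matrix n n ℝ) * (hA.eigenvectorUnitary : Matrix n n ℝ)ᵀ = 1 := by
  rw [← conjTranspose_eq_transpose_of_trivial]
  exact Unitary.coe_mul_star_self hA.eigenvectorUnitary

theorem eq_eigenvectorUnitary_mul_diagonal_mul_transpose :
    A = hA.eigenvectorUnitary * diagonal hA.eigenvalues *
      (hA.eigenvectorUnitary : Matrix n n ℝ)ᵀ := by
  simpa [star_eq_conjTranspose] using hA.spectral_theorem

theorem exists_rayleigh_eq_of_mem_convexHull {t : ℝ}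
    (ht : t ∈ convexHull ℝ (range hA.eigenvalues)) :
    ∃ w ≠ 0, w ⬝ᵥ A *ᵥ w / (w ⬝ᵥ w) = t := by
  have h := exists_dotProduct_mul_diagonal_mul_transpose_mulVec_div_eq
    hA.mul_transpose_eigenvectorUnitary ht
  rwa [← hA.eq_eigenvectorUnitary_mul_diagonal_mul_transpose] at h

theorem rayleigh_inv_sub_smul_one_mem_image {lam : ℝ}
    (hlam : lam ∉ Icc (⨅ i, hA.eigenvalues i) (⨆ i, hA.eigenvalues i)) {x : n → ℝ}
    (hx : x ≠ 0) :
    x ⬝ᵥ (A - lam • 1)⁻¹ *ᵥ x / (x ⬝ᵥ x) ∈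
      (fun t => (t - lam)⁻¹) '' Icc (⨅ i, hA.eigenvalues i) (⨆ i, hA.eigenvalues i) := by
  set I := Icc (⨅ i, hA.eigenvalues i) (⨆ i, hA.eigenvalues i)
  have hmem : ∀ k, hA.eigenvalues k ∈ I := fun k =>
    ⟨ciInf_le (finite_range _).bddBelow k, le_ciSup (finite_range _).bddAbove k⟩
  have hconv : Convex ℝ ((fun t => (t - lam)⁻¹) '' I) := by
    refine Real.convex_iff_isPreconnected.mpr (isPreconnected_Icc.image _ ?_)
    exact (continuousOn_id.sub continuousOn_const).inv₀ fun t ht =>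
      sub_ne_zero.mpr (ne_of_mem_of_not_mem ht hlam)
  have hU := hA.mul_transpose_eigenvectorUnitary
  rw [hA.eq_eigenvectorUnitary_mul_diagonal_mul_transpose,
    inv_mul_diagonal_mul_transpose_sub_smul_one hU fun k => ne_of_mem_of_not_mem (hmem k) hlam]
  refine convexHull_min ?_ hconv
    (dotProduct_mul_diagonal_mul_transpose_mulVec_div_mem_convexHull hU _ hx)
  rintro _ ⟨k, rfl⟩
  exact mem_image_of_mem _ (hmem k)

end IsHermitian

end Matrix

theorem resolvent_rayleigh_quotient {n : ℕ} (hn : 0 < n)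
    (A : Matrix (Fin n) (Fin n) ℝ) (hA : A.PosDef) (lam : ℝ)
    (hlam : lam ∉ Set.Icc (⨅ i, hA.1.eigenvalues i) (⨆ i, hA.1.eigenvalues i))
    (s : Fin n → ℝ) (hs : s ≠ 0) :
    ∃ w : Fin n → ℝ, w ≠ 0 ∧
      (s ⬝ᵥ (A - lam • 1)⁻¹.mulVec s) / (s ⬝ᵥ s) =
        ((w ⬝ᵥ A.mulVec w) / (w ⬝ᵥ w) - lam)⁻¹ := by
  have : Nonempty (Fin n) := ⟨⟨0, hn⟩⟩
  obtain ⟨t, ht, hst⟩ := hA.1.rayleigh_inv_sub_smul_one_mem_image hlam hs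
  obtain ⟨w, hw, hwt⟩ :=
    hA.1.exists_rayleigh_eq_of_mem_convexHull (Icc_iInf_iSup_subset_convexHull_range _ ht)
  exact ⟨w, hw, by rw [hwt]; exact hst.symm⟩
end

section
/- Let γA, γE, γK, γR, γD be positive reals with π(λ) = λ³ - (γA + γE - γD)λ² - (γR + γK + γEγD + γAγD - γEγA)λ + (γAγK + γEγR + γEγAγD). If μ is a negative root of π, then μ ≥ s-, where s- = (-γD - sqrt(γD² + 4(γR + γK)))/2 is the negative root of r(λ) = λ(λ² + γD·λ - γR - γK). In particular μ ≥ -γD - sqrt(γR + γK). -/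
/-!
Write `π = γA qA + γE qE + r` with `qA(x) = γK - (x - γE)(x + γD)`, `qE(x) = γR - x (x + γD)` and
`r(x) = x (x² + γD x - γR - γK)`. If a negative root `μ` had `μ² + γD μ > γR + γK`, then
`μ + γD < 0` and all three of `qA(μ)`, `qE(μ)`, `r(μ)` would be negative, so `π(μ) < 0`. Hence `μ² + γD μ ≤ γR + γK`, which places `μ` above the negative root
of the quadratic factor of `r`.
-/

namespace PiCubic

variable (γA γE γK γR γD : ℝ)

def pi (x : ℝ) : ℝ :=
  x ^ 3 - (γA + γE - γD) * x ^ 2 - (γR + γK + γE * γD + γA * γD - γE * γA) * x +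
    (γA * γK + γE * γR + γE * γA * γD)

def qA (x : ℝ) : ℝ := γK - (x - γE) * (x + γD)

-- `qA` already carries the `γA γE (x + γD)` cross term; the sketch's `qE` would count it twice.
def qE (x : ℝ) : ℝ := γR - x * (x + γD)

def r (x : ℝ) : ℝ := x * (x ^ 2 + γD * x - γR - γK)

theorem pi_eq_add (x : ℝ) :
    pi γA γE γK γR γD x = γA * qA γE γK γD x + γE * qE γR γD x + r γK γR γD x := by
  unfold pi qA qE r
  ring

variable {γA γE γK γR γD}

theorem qA_neg {x : ℝ} (hE : 0 ≤ γE) (hx : x + γD ≤ 0) (hK : γK < x * (x + γD)) :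
    qA γE γK γD x < 0 := by
  unfold qA
  nlinarith [mul_nonpos_of_nonneg_of_nonpos hE hx]

theorem qE_neg {x : ℝ} (hR : γR < x * (x + γD)) : qE γR γD x < 0 := by
  unfold qE
  linarith

theorem r_neg {x : ℝ} (hx : x < 0) (h : γR + γK < x * (x + γD)) : r γK γR γD x < 0 := by
  unfold r
  exact mul_neg_of_neg_of_pos hx (by linarith)

theorem sq_add_mul_le_of_pi_eq_zero {μ : ℝ} (hA : 0 ≤ γA) (hE : 0 ≤ γE) (hK : 0 ≤ γK)
    (hR : 0 ≤ γR) (hμ : μ < 0) (hroot : pi γA γE γK γR γD μ = 0) :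
    μ ^ 2 + γD * μ ≤ γR + γK := by
  by_contra! h
  have hgt : γR + γK < μ * (μ + γD) := by linarith
  have hμD : μ + γD ≤ 0 := (neg_of_mul_pos_right (by linarith) hμ.le).le
  have hqA := qA_neg hE hμD (show γK < μ * (μ + γD) by linarith)
  have hqE := qE_neg (show γR < μ * (μ + γD) by linarith)
  have hr := r_neg hμ hgt
  have := pi_eq_add γA γE γK γR γD μ
  linarith [mul_nonpos_of_nonneg_of_nonpos hA hqA.le, mul_nonpos_of_nonneg_of_nonpos hE hqE.le]

end PiCubic

theorem neg_root_le_of_sq_add_mul_le {d c x : ℝ} (h : x ^ 2 + d * x ≤ c) :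
    (-d - Real.sqrt (d ^ 2 + 4 * c)) / 2 ≤ x := by
  have hsq : (2 * x + d) ^ 2 ≤ d ^ 2 + 4 * c := by nlinarith
  linarith [neg_abs_le (2 * x + d), Real.abs_le_sqrt hsq]

theorem neg_sub_sqrt_le_neg_root {d c : ℝ} (hd : 0 ≤ d) (hc : 0 ≤ c) :
    -d - Real.sqrt c ≤ (-d - Real.sqrt (d ^ 2 + 4 * c)) / 2 := by
  have hs := Real.sqrt_nonneg c
  have : Real.sqrt (d ^ 2 + 4 * c) ≤ d + 2 * Real.sqrt c := by
    rw [Real.sqrt_le_iff]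
    exact ⟨by positivity, by nlinarith [Real.sq_sqrt hc, mul_nonneg hd hs]⟩
  linarith

theorem negative_root_of_pi_bound (γA γE γK γR γD : ℝ)
    (hA : 0 < γA) (hE : 0 < γE) (hK : 0 < γK) (hR : 0 < γR) (hD : 0 < γD)
    (μ : ℝ) (hμ : μ < 0)
    (hroot : μ ^ 3 - (γA + γE - γD) * μ ^ 2 -
      (γR + γK + γE * γD + γA * γD - γE * γA) * μ +
      (γA * γK + γE * γR + γE * γA * γD) = 0) :
    (-γD - Real.sqrt (γD ^ 2 + 4 * (γR + γK))) / 2 ≤ μ ∧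
    -γD - Real.sqrt (γR + γK) ≤ μ := by
  have hquad : μ ^ 2 + γD * μ ≤ γR + γK :=
    PiCubic.sq_add_mul_le_of_pi_eq_zero hA.le hE.le hK.le hR.le hμ hroot
  have hroot_le := neg_root_le_of_sq_add_mul_le hquad
  exact ⟨hroot_le, (neg_sub_sqrt_le_neg_root hD.le (by positivity)).trans hroot_le⟩
end

section
/- Let γA, γS, γD be reals with 0 < γA, 0 < γS, 0 ≤ γD, γS = γR + γD for some γR > 0, and γA ≤ γ_max^A, γD ≤ γ_max^D, γR ≥ γ_min^R > 0. If ζ is real with either 0 < ζ < min{γA, γ_min^R/(γ_max^A + γ_min^R + γ_max^D)} or ζ ≥ γ_max^A + γS, then the scalar quantity q(ζ) = (1-ζ)·γS/(ζ - γA) - γD·(1-γA)/(ζ - γA) + ζ is nonzero. -/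
/-!
Clearing the denominator `ζ - γA` turns `q` into the quadratic
`h(ζ) = ζ² - (γA + γS) ζ + γR + γD γA`, so it suffices to see that `h > 0` on both ranges.
For large `ζ` write `h(ζ) = ζ (ζ - γA - γS) + γR + γD γA`. For small `ζ`, the choice of the
threshold `γRmin / (γAmax + γRmin + γDmax)` is exactly what makes the linear term
`(γA + γS) ζ` smaller than the constant term `γR`.
-/

noncomputable def scalarQ (γA γS γD ζ : ℝ) : ℝ :=
  (1 - ζ) * γS / (ζ - γA) - γD * (1 - γA) / (ζ - γA) + ζ

def scalarH (γA γS γD γR ζ : ℝ) : ℝ :=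
  ζ ^ 2 - (γA + γS) * ζ + γR + γD * γA

section

variable {γA γS γD γR ζ : ℝ}

theorem scalarQ_eq_scalarH_div (hsum : γS = γR + γD) (hζ : ζ ≠ γA) :
    scalarQ γA γS γD ζ = scalarH γA γS γD γR ζ / (ζ - γA) := by
  have hd : ζ - γA ≠ 0 := sub_ne_zero.mpr hζ
  unfold scalarQ scalarH
  field_simp
  rw [hsum]
  ring

theorem scalarQ_eq_zero_iff (hsum : γS = γR + γD) (hζ : ζ ≠ γA) :
    scalarQ γA γS γD ζ = 0 ↔ scalarH γA γS γD γR ζ = 0 := by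
  rw [scalarQ_eq_scalarH_div hsum hζ, div_eq_zero_iff, sub_eq_zero, or_iff_left hζ]

theorem linear_term_lt_of_lt_threshold {γAmax γDmax γRmin : ℝ}
    (hA : 0 < γA) (hD : 0 ≤ γD) (hsum : γS = γR + γD)
    (hAmax : γA ≤ γAmax) (hDmax : γD ≤ γDmax) (hRmin : 0 < γRmin) (hRmin' : γRmin ≤ γR)
    (hζ0 : 0 < ζ) (hζ : ζ < γRmin / (γAmax + γRmin + γDmax)) :
    (γA + γS) * ζ < γR := by
  have hden : γRmin ≤ γAmax + γRmin + γDmax := by linarith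
  have hζ_mul : ζ * (γAmax + γRmin + γDmax) < γRmin :=
    (lt_div_iff₀ (hRmin.trans_le hden)).mp hζ
  have hζ_lt_one : ζ < 1 :=
    hζ.trans_le ((div_le_one (hRmin.trans_le hden)).mpr hden)
  calc (γA + γS) * ζ ≤ (γAmax + γR + γDmax) * ζ :=
        mul_le_mul_of_nonneg_right (by linarith) hζ0.le
    _ = ζ * (γAmax + γRmin + γDmax) + ζ * (γR - γRmin) := by ring
    _ < γRmin + (γR - γRmin) :=
        add_lt_add_of_lt_of_le hζ_mul (mul_le_of_le_one_left (sub_nonneg.2 hRmin') hζ_lt_one.le)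
    _ = γR := by ring

theorem scalarH_pos_of_linear_term_lt (hA : 0 ≤ γA) (hD : 0 ≤ γD)
    (hlin : (γA + γS) * ζ < γR) :
    0 < scalarH γA γS γD γR ζ := by
  unfold scalarH
  nlinarith [sq_nonneg ζ, mul_nonneg hD hA]

theorem scalarH_pos_of_le (hA : 0 ≤ γA) (hS : 0 ≤ γS) (hD : 0 ≤ γD) (hR : 0 < γR)
    (hζ : γA + γS ≤ ζ) :
    0 < scalarH γA γS γD γR ζ := by
  have hfactor : scalarH γA γS γD γR ζ = ζ * (ζ - (γA + γS)) + γR + γD * γA := by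
    unfold scalarH; ring
  rw [hfactor]
  have : 0 ≤ ζ * (ζ - (γA + γS)) := mul_nonneg (by linarith) (by linarith)
  nlinarith [mul_nonneg hD hA]

end

theorem scalar_lemma4_general (γA γS γD γR γAmax γDmax γRmin : ℝ)
    (hA : 0 < γA) (hD : 0 ≤ γD)
    (hsum : γS = γR + γD)
    (hAmax : γA ≤ γAmax) (hDmax : γD ≤ γDmax)
    (hRmin : 0 < γRmin) (hRmin' : γRmin ≤ γR)
    (ζ : ℝ)
    (hζ : (0 < ζ ∧ ζ < min γA (γRmin / (γAmax + γRmin + γDmax))) ∨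
      γAmax + γS ≤ ζ) :
    (1 - ζ) * γS / (ζ - γA) - γD * (1 - γA) / (ζ - γA) + ζ ≠ 0 := by
  have hR : 0 < γR := hRmin.trans_le hRmin'
  have hS : 0 < γS := by linarith
  show scalarQ γA γS γD ζ ≠ 0
  rcases hζ with ⟨hζ0, hζ_small⟩ | hζ_large
  · rw [ne_eq, scalarQ_eq_zero_iff hsum (hζ_small.trans_le (min_le_left _ _)).ne]
    exact (scalarH_pos_of_linear_term_lt hA.le hD <| linear_term_lt_of_lt_threshold hA hD hsum
      hAmax hDmax hRmin hRmin' hζ0 (hζ_small.trans_le (min_le_right _ _))).ne'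
  · have hζA : γA + γS ≤ ζ := by linarith
    rw [ne_eq, scalarQ_eq_zero_iff hsum (by linarith)]
    exact (scalarH_pos_of_le hA.le hS.le hD hR hζA).ne'

theorem scalar_lemma4 (γA γS γD γR γAmax γDmax γRmin : ℝ)
    (hA : 0 < γA) (hS : 0 < γS) (hD : 0 ≤ γD) (hR : 0 < γR)
    (hsum : γS = γR + γD)
    (hAmax : γA ≤ γAmax) (hDmax : γD ≤ γDmax)
    (hRmin : 0 < γRmin) (hRmin' : γRmin ≤ γR)
    (ζ : ℝ)
    (hζ : (0 < ζ ∧ ζ < min γA (γRmin / (γAmax + γRmin + γDmax))) ∨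
      γAmax + γS ≤ ζ) :
    (1 - ζ) * γS / (ζ - γA) - γD * (1 - γA) / (ζ - γA) + ζ ≠ 0 :=
  scalar_lemma4_general γA γS γD γR γAmax γDmax γRmin hA hD hsum hAmax hDmax hRmin hRmin' ζ hζ
end
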